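/- arXiv:1305.6856 — 2 statements merged into one kernel-verified Lean document; each statement's English description precedes it below -/
import Mathlib

section
/- In a completely inverse AG**-groupoid, the relation μ given by aa^{-1} = bb^{-1} is the maximum idempotent-separating congruence: every congruence ρ such that distinct idempotents are never ρ-related is contained in μ. -/
/-!
Let `a ρ b` with `e = a a⁻¹` and `f = b b⁻¹`. Then `e = a⁻¹ a ρ a⁻¹ b =: z` and
`z⁻¹ = a b⁻¹ ρ f`, so the idempotents `z z⁻¹` and `e f` are `ρ`-related, hence equal.
Consequently `z = (z z⁻¹) z = (e f) z ρ (e f) e = f e`, so the idempotents `e` and `f e`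
are `ρ`-related and `e = f e`. By symmetry `f = e f`, and the left invertive law gives
`e = (f f) e = (e f) f = f`.
-/

def Con.IsIdempotentSeparating {A : Type*} [Mul A] (c : Con A) : Prop :=
  ∀ e f : A, IsIdempotentElem e → IsIdempotentElem f → c e f → e = f

namespace AGGroupoid

variable {A : Type*} [Mul A]

theorem medial (hAG : ∀ x y z : A, x * y * z = z * y * x) (x y z w : A) :
    x * y * (z * w) = x * z * (y * w) := by
  rw [hAG x y (z * w), hAG z w y, hAG (y * w) z x]

theorem isIdempotentElem_mul (hAG : ∀ x y z : A, x * y * z = z * y * x) {e f : A}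
    (he : IsIdempotentElem e) (hf : IsIdempotentElem f) : IsIdempotentElem (e * f) := by
  rw [IsIdempotentElem, medial hAG, he.eq, hf.eq]

theorem mul_mul_of_isIdempotentElem (hAG : ∀ x y z : A, x * y * z = z * y * x)
    (hStar : ∀ x y z : A, x * (y * z) = y * (x * z)) {e : A} (he : IsIdempotentElem e)
    (f : A) : e * f * e = f * e := by
  calc e * f * e = e * f * (e * e) := by rw [he.eq]
    _ = e * (f * e) := by rw [medial hAG, he.eq]
    _ = f * e := by rw [hStar, he.eq]

theorem eq_of_eq_mul_of_eq_mul (hAG : ∀ x y z : A, x * y * z = z * y * x) {e f : A}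
    (hf : IsIdempotentElem f) (hfe : e = f * e) (hef : f = e * f) : e = f :=
  calc e = f * e := hfe
    _ = f * f * e := by rw [hf.eq]
    _ = e * f * f := hAG f f e
    _ = f := by rw [← hef, hf.eq]

structure IsCompletelyInverse (inv : A → A) : Prop where
  left_invertive : ∀ x y z : A, x * y * z = z * y * x
  mul_inv_mul : ∀ a : A, a * inv a * a = a
  inv_mul_inv : ∀ a : A, inv a * a * inv a = inv a
  mul_inv_comm : ∀ a : A, a * inv a = inv a * a
  eq_inv : ∀ a b : A, a * b * a = a → b * a * b = b → b = inv a

namespace IsCompletelyInverse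

variable {inv : A → A}

theorem mul_inv_mul_inv (h : IsCompletelyInverse inv) (a : A) : a * inv a * inv a = inv a := by
  rw [h.mul_inv_comm, h.inv_mul_inv]

theorem isIdempotentElem_mul_inv (h : IsCompletelyInverse inv) (a : A) :
    IsIdempotentElem (a * inv a) := by
  rw [IsIdempotentElem, h.left_invertive, h.mul_inv_mul_inv, h.mul_inv_comm]

theorem inv_inv (h : IsCompletelyInverse inv) (a : A) : inv (inv a) = a :=
  (h.eq_inv _ _ (h.inv_mul_inv a) (h.mul_inv_mul a)).symm

theorem inv_mul (h : IsCompletelyInverse inv) (a b : A) : inv (a * b) = inv a * inv b := by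
  refine (h.eq_inv _ _ ?_ ?_).symm
  · rw [medial h.left_invertive a b, medial h.left_invertive (a * inv a), h.mul_inv_mul,
      h.mul_inv_mul]
  · rw [medial h.left_invertive (inv a), ← h.mul_inv_comm, ← h.mul_inv_comm,
      medial h.left_invertive (a * inv a), h.mul_inv_mul_inv, h.mul_inv_mul_inv]

variable {c : Con A}

theorem mul_inv_eq_mul_mul_inv_of_con (h : IsCompletelyInverse inv)
    (hStar : ∀ x y z : A, x * (y * z) = y * (x * z)) (hc : c.IsIdempotentSeparating)
    {a b : A} (hab : c a b) :
    a * inv a = b * inv b * (a * inv a) := by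
  set e := a * inv a
  set f := b * inv b
  set z := inv a * b
  have he : IsIdempotentElem e := h.isIdempotentElem_mul_inv a
  have hf : IsIdempotentElem f := h.isIdempotentElem_mul_inv b
  have hez : c e z := by
    rw [show e = inv a * a from h.mul_inv_comm a]
    exact c.mul (c.refl _) hab
  have hzf : c (inv z) f := by
    rw [h.inv_mul, h.inv_inv]
    exact c.mul hab (c.refl _)
  have hzz : z * inv z = e * f :=
    hc _ _ (h.isIdempotentElem_mul_inv z) (isIdempotentElem_mul h.left_invertive he hf)
      (c.mul (c.symm hez) hzf)
  have hz : c z (f * e) := by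
    have : c (e * f * z) (e * f * e) := c.mul (c.refl _) (c.symm hez)
    rwa [← hzz, h.mul_inv_mul, hzz,
      mul_mul_of_isIdempotentElem h.left_invertive hStar he] at this
  exact hc _ _ he (isIdempotentElem_mul h.left_invertive hf he) (c.trans hez hz)

theorem mul_inv_eq_of_con (h : IsCompletelyInverse inv)
    (hStar : ∀ x y z : A, x * (y * z) = y * (x * z)) (hc : c.IsIdempotentSeparating)
    {a b : A} (hab : c a b) : a * inv a = b * inv b :=
  eq_of_eq_mul_of_eq_mul h.left_invertive (h.isIdempotentElem_mul_inv b)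
    (h.mul_inv_eq_mul_mul_inv_of_con hStar hc hab)
    (h.mul_inv_eq_mul_mul_inv_of_con hStar hc (c.symm hab))

end IsCompletelyInverse

end AGGroupoid

/-- In a completely inverse AG**-groupoid, `μ` (given by `a*a⁻¹ = b*b⁻¹`) is the
maximum idempotent-separating congruence: every idempotent-separating congruence is
contained in `μ`. -/
theorem mu_maximum_idempotent_separating {A : Type*} [Mul A] (inv : A → A)
(hAG : ∀ x y z : A, x * y * z = z * y * x)
    (hStar : ∀ x y z : A, x * (y * z) = y * (x * z))
    (hinv1 : ∀ a : A, (a * inv a) * a = a)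
    (hinv2 : ∀ a : A, (inv a * a) * inv a = inv a)
    (hcomm : ∀ a : A, a * inv a = inv a * a)
    (huniq : ∀ a b : A, (a * b) * a = a → (b * a) * b = b → b = inv a)
    (r : A → A → Prop) (hequiv : Equivalence r)
    (hcompat : ∀ a b c d : A, r a b → r c d → r (a * c) (b * d))
    (hsep : ∀ e f : A, e * e = e → f * f = f → r e f → e = f)
    (a b : A) (hab : r a b) :
    a * inv a = b * inv b :=
  AGGroupoid.IsCompletelyInverse.mul_inv_eq_of_con ⟨hAG, hinv1, hinv2, hcomm, huniq⟩ hStar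
    (c := ⟨⟨r, hequiv⟩, hcompat _ _ _ _⟩) hsep hab
end

section
/- Let ρ be a congruence on a completely inverse AG**-groupoid A. Then (a,b) ∈ ρ if and only if (aa^{-1}, bb^{-1}) ∈ ρ and ab^{-1} is ρ-related to some idempotent of A. Consequently, every congruence on A is uniquely determined by its kernel and trace. -/
/-!
Passing to the quotient `A/ρ`, which is again an AG-groupoid in which the images of `a` and
`a⁻¹` are mutual commuting inverses, reduces everything to two facts about an AG-groupoid:
commuting inverses are unique (so `ρ` respects `⁻¹`, giving the forward direction), and if
`a a⁻¹ = b b⁻¹` and `a b⁻¹` is idempotent then `a = b`. The second fact comes from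
`a = (b b⁻¹) a = (a b⁻¹) b` together with `a b⁻¹ = a a⁻¹`.
-/

/-- The left invertive law of an AG-groupoid (left almost semigroup). -/
def LeftInvertive (M : Type*) [Mul M] : Prop :=
  ∀ x y z : M, x * y * z = z * y * x

structure IsCommInverse {M : Type*} [Mul M] (a x : M) : Prop where
  mul_mul_left : a * x * a = a
  mul_mul_right : x * a * x = x
  comm : a * x = x * a

namespace LeftInvertive

variable {M : Type*} [Mul M] (hL : LeftInvertive M)
include hL

theorem medial (a b c d : M) : a * b * (c * d) = a * c * (b * d) :=
  calc a * b * (c * d) = c * d * b * a := hL a b (c * d)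
    _ = b * d * c * a := by rw [hL c d b]
    _ = a * c * (b * d) := hL (b * d) c a

theorem mul_self_of_isCommInverse {a x : M} (h : IsCommInverse a x) :
    a * x * (a * x) = a * x :=
  calc a * x * (a * x) = x * a * (a * x) := by rw [← h.comm]
    _ = a * x * a * x := (hL (a * x) a x).symm
    _ = a * x := by rw [h.mul_mul_left]

theorem isCommInverse_unique {a x y : M} (hx : IsCommInverse a x) (hy : IsCommInverse a y) :
    x = y := by
  have absorb : ∀ {u v : M}, IsCommInverse a u → IsCommInverse a v →
      a * v = a * v * (a * u) := fun {u v} hu hv =>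
    calc a * v = a * u * a * v := by rw [hu.mul_mul_left]
      _ = v * a * (a * u) := hL (a * u) a v
      _ = a * v * (a * u) := by rw [← hv.comm]
  have idem_comm : a * x * (a * y) = a * y * (a * x) :=
    calc a * x * (a * y) = a * x * (a * y) * (a * y) := congrArg (· * (a * y)) (absorb hy hx)
      _ = a * y * (a * y) * (a * x) := hL _ _ _
      _ = a * y * (a * x) := by rw [hL.mul_self_of_isCommInverse hy]
  have hxy : a * x = a * y := (absorb hy hx).trans (idem_comm.trans (absorb hx hy).symm)
  calc x = a * x * x := by rw [hx.comm, hx.mul_mul_right]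
    _ = a * y * x := by rw [hxy]
    _ = a * x * y := by rw [hy.comm, hL, ← hx.comm]
    _ = y := by rw [hxy, hy.comm, hy.mul_mul_right]

theorem eq_of_mul_inverse_eq {a b x y : M} (hx : IsCommInverse a x) (hy : IsCommInverse b y)
    (hxy : a * x = b * y) (hidem : a * y * (a * y) = a * y) : a = b := by
  have ha : a = a * y * b :=
    calc a = b * y * a := by rw [← hxy, hx.mul_mul_left]
      _ = a * y * b := hL b y a
  have hay : a * y = a * x * (a * y) :=
    calc a * y = a * y * b * y := by rw [← ha]
      _ = y * b * (a * y) := hL _ _ _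
      _ = a * x * (a * y) := by rw [← hy.comm, hxy]
  have hax : a * x = x * b * (a * y) :=
    calc a * x = a * y * b * x := by rw [← ha]
      _ = x * b * (a * y) := hL _ _ _
  have hyx : a * y = a * x :=
    calc a * y = x * b * (a * y) * (a * y) := by rw [← hax, ← hay]
      _ = a * y * (a * y) * (x * b) := hL _ _ _
      _ = a * x * (y * b) := by rw [hidem, hL.medial]
      _ = a * x := by rw [← hy.comm, ← hxy, hL.mul_self_of_isCommInverse hx]
  calc a = a * y * b := ha
    _ = b := by rw [hyx, hxy, hy.mul_mul_left]

end LeftInvertive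

namespace Con

variable {M : Type*} [Mul M] (c : Con M)

theorem leftInvertive_quotient (hL : LeftInvertive M) : LeftInvertive c.Quotient := by
  intro x y z
  induction x using Con.induction_on
  induction y using Con.induction_on
  induction z using Con.induction_on
  simp only [← Con.coe_mul, hL _ _ _]

theorem isCommInverse_coe {a x : M} (h : IsCommInverse a x) :
    IsCommInverse (a : c.Quotient) (x : c.Quotient) where
  mul_mul_left := by rw [← coe_mul, ← coe_mul, h.mul_mul_left]
  mul_mul_right := by rw [← coe_mul, ← coe_mul, h.mul_mul_right]
  comm := by rw [← coe_mul, ← coe_mul, h.comm]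

variable {c} (hL : LeftInvertive M) {inv : M → M} (hinv : ∀ a, IsCommInverse a (inv a))
include hL hinv

theorem inv_of_rel {a b : M} (h : c a b) : c (inv a) (inv b) := by
  have hab : (a : c.Quotient) = b := c.eq.2 h
  refine c.eq.1 ((c.leftInvertive_quotient hL).isCommInverse_unique
    (c.isCommInverse_coe (hinv a)) ?_)
  exact hab ▸ c.isCommInverse_coe (hinv b)

theorem rel_iff_trace_kernel (a b : M) :
    c a b ↔ c (a * inv a) (b * inv b) ∧ ∃ e, e * e = e ∧ c (a * inv b) e := by
  constructor
  · intro h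
    exact ⟨c.mul h (inv_of_rel hL hinv h), b * inv b, hL.mul_self_of_isCommInverse (hinv b),
      c.mul h (c.refl (inv b))⟩
  · rintro ⟨htrace, e, he, hker⟩
    have hidem : (a : c.Quotient) * inv b * (a * inv b) = a * inv b := by
      rw [← coe_mul, c.eq.2 hker, ← coe_mul, he]
    refine c.eq.1 ((c.leftInvertive_quotient hL).eq_of_mul_inverse_eq
      (c.isCommInverse_coe (hinv a)) (c.isCommInverse_coe (hinv b)) ?_ hidem)
    rw [← coe_mul, ← coe_mul, c.eq.2 htrace]

theorem eq_of_trace_kernel {d : Con M}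
    (htrace : ∀ e f : M, e * e = e → f * f = f → (c e f ↔ d e f))
    (hker : ∀ a e : M, e * e = e → (c a e ↔ d a e)) : c = d := by
  refine Con.ext fun a b => ?_
  rw [rel_iff_trace_kernel hL hinv a b, rel_iff_trace_kernel hL hinv a b,
    htrace _ _ (hL.mul_self_of_isCommInverse (hinv a)) (hL.mul_self_of_isCommInverse (hinv b))]
  exact and_congr_right' (exists_congr fun e => and_congr_right fun he => hker _ _ he)

end Con

theorem congruence_kernel_trace_general {A : Type*} [Mul A] (inv : A → A)
(hAG : ∀ x y z : A, x * y * z = z * y * x)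
    (hinv1 : ∀ a : A, (a * inv a) * a = a)
    (hinv2 : ∀ a : A, (inv a * a) * inv a = inv a)
    (hcomm : ∀ a : A, a * inv a = inv a * a)
    (r : A → A → Prop) (hequiv : Equivalence r)
    (hcompat : ∀ a b c d : A, r a b → r c d → r (a * c) (b * d)) :
    (∀ a b : A, r a b ↔
      (r (a * inv a) (b * inv b) ∧ ∃ e : A, e * e = e ∧ r (a * inv b) e)) ∧
    (∀ r' : A → A → Prop, Equivalence r' →
      (∀ a b c d : A, r' a b → r' c d → r' (a * c) (b * d)) →
      (∀ e f : A, e * e = e → f * f = f → (r e f ↔ r' e f)) →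
      (∀ a : A, ∀ e : A, e * e = e → (r a e ↔ r' a e)) →
      ∀ a b : A, r a b ↔ r' a b) := by
  have hinv : ∀ a, IsCommInverse a (inv a) := fun a => ⟨hinv1 a, hinv2 a, hcomm a⟩
  let c : Con A := ⟨⟨r, hequiv⟩, hcompat _ _ _ _⟩
  refine ⟨Con.rel_iff_trace_kernel (c := c) hAG hinv, fun r' hequiv' hcompat' htrace hker => ?_⟩
  let d : Con A := ⟨⟨r', hequiv'⟩, hcompat' _ _ _ _⟩
  exact Con.ext_iff.1 (Con.eq_of_trace_kernel (c := c) (d := d) hAG hinv htrace hker)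

/-- A congruence on a completely inverse AG**-groupoid is determined by its kernel
and trace: `(a,b) ∈ ρ` iff `(a a⁻¹, b b⁻¹) ∈ ρ` and `a b⁻¹ ∈ ker ρ`; consequently
two congruences with the same kernel and trace coincide. -/
theorem congruence_kernel_trace {A : Type*} [Mul A] (inv : A → A)
(hAG : ∀ x y z : A, x * y * z = z * y * x)
    (hStar : ∀ x y z : A, x * (y * z) = y * (x * z))
    (hinv1 : ∀ a : A, (a * inv a) * a = a)
    (hinv2 : ∀ a : A, (inv a * a) * inv a = inv a)
    (hcomm : ∀ a : A, a * inv a = inv a * a)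
    (huniq : ∀ a b : A, (a * b) * a = a → (b * a) * b = b → b = inv a)
    (r : A → A → Prop) (hequiv : Equivalence r)
    (hcompat : ∀ a b c d : A, r a b → r c d → r (a * c) (b * d)) :
    (∀ a b : A, r a b ↔
      (r (a * inv a) (b * inv b) ∧ ∃ e : A, e * e = e ∧ r (a * inv b) e)) ∧
    (∀ r' : A → A → Prop, Equivalence r' →
      (∀ a b c d : A, r' a b → r' c d → r' (a * c) (b * d)) →
      (∀ e f : A, e * e = e → f * f = f → (r e f ↔ r' e f)) →
      (∀ a : A, ∀ e : A, e * e = e → (r a e ↔ r' a e)) →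
      ∀ a b : A, r a b ↔ r' a b) :=
  congruence_kernel_trace_general inv hAG hinv1 hinv2 hcomm r hequiv hcompat
end
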